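/- Let n ≥ 1 and set r_k = sqrt(k(2n−k)/2) for integers 0 ≤ k ≤ 2n (so r_0 = r_{2n} = 0). For every nonzero (t_1, …, t_{2n}) ∈ ℂ^{2n}, the strict inequality Σ_{i=1}^{n} r_{2i−1} ( |t_{2i−1}|^2 + |t_{2i}|^2 ) > | Σ_{i=1}^{n−1} r_{2i} ( t_{2i} · conj(t_{2i+2}) + conj(t_{2i+1}) · t_{2i−1} ) | holds. Consequently, if a ∈ ℂ satisfies conj(a) · Σ_{i=1}^{n} r_{2i−1} ( |t_{2i−1}|^2 + |t_{2i}|^2 ) + a · Σ_{i=1}^{n−1} r_{2i} ( t_{2i} · conj(t_{2i+2}) + conj(t_{2i+1}) · t_{2i−1} ) = 0, then a = 0. -/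

import Mathlib

open Finset

/-- The entries `r_k = sqrt(k(2n−k)/2)` of the Higgs field of the Fuchsian
`SL(2n,ℝ)`-Higgs bundle. -/
noncomputable def rHiggs (n : ℕ) (k : ℕ) : ℝ :=
  Real.sqrt ((k : ℝ) * ((2*n : ℝ) - (k : ℝ)) / 2)

lemma rHiggs_nonneg (n k : ℕ) : 0 ≤ rHiggs n k := Real.sqrt_nonneg _

lemma rHiggs_sq (n k : ℕ) (h : k ≤ 2*n) :
    (rHiggs n k)^2 = (k : ℝ) * ((2*n : ℝ) - (k : ℝ)) / 2 := by
  have hk : ((k:ℝ)) ≤ 2*(n:ℝ) := by exact_mod_cast h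
  have : (0:ℝ) ≤ (k : ℝ) * ((2*n : ℝ) - (k : ℝ)) / 2 := by
    have : (0:ℝ) ≤ (k:ℝ) := Nat.cast_nonneg k
    nlinarith
  exact Real.sq_sqrt this

lemma rHiggs_key (n j : ℕ) (hj : j + 1 ≤ n) :
    rHiggs n (2*j+2) + rHiggs n (2*j) < 2 * rHiggs n (2*j+1) := by
  have ha := rHiggs_sq n (2*j+2) (by omega)
  have hb := rHiggs_sq n (2*j) (by omega)
  have hc := rHiggs_sq n (2*j+1) (by omega)
  have hN : (j:ℝ) + 1 ≤ (n:ℝ) := by exact_mod_cast hj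
  have hj0 : (0:ℝ) ≤ (j:ℝ) := Nat.cast_nonneg j
  push_cast at ha hb hc
  have ha0 := rHiggs_nonneg n (2*j+2)
  have hb0 := rHiggs_nonneg n (2*j)
  have hc0 := rHiggs_nonneg n (2*j+1)
  have hcsq : (1:ℝ)/2 ≤ (rHiggs n (2*j+1))^2 := by rw [hc]; nlinarith
  nlinarith [sq_nonneg (rHiggs n (2*j+2) - rHiggs n (2*j)), ha, hb, hc, hcsq, ha0, hb0, hc0]

lemma abel_id (m : ℕ) (e A : ℕ → ℝ) :
    ∑ j ∈ range (m+1), (e (j+1) + e j) * A j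
      = (∑ i ∈ range m, e (i+1) * (A i + A (i+1))) + e (m+1) * A m + e 0 * A 0 := by
  have h1 : ∑ j ∈ range (m+1), (e (j+1) + e j) * A j
      = ∑ j ∈ range (m+1), e (j+1) * A j + ∑ j ∈ range (m+1), e j * A j := by
    rw [← Finset.sum_add_distrib]
    exact Finset.sum_congr rfl fun j _ => by ring
  rw [h1, Finset.sum_range_succ (fun j => e (j+1) * A j) m,
    Finset.sum_range_succ' (fun j => e j * A j) m]
  have h2 : ∑ i ∈ range m, e (i+1) * (A i + A (i+1))
      = ∑ i ∈ range m, e (i+1) * A i + ∑ i ∈ range m, e (i+1) * A (i+1) := by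
    rw [← Finset.sum_add_distrib]
    exact Finset.sum_congr rfl fun j _ => by ring
  rw [h2]; ring

lemma term_bound (r : ℝ) (hr : 0 ≤ r) (u v u' v' : ℂ) :
    ‖(r:ℂ) * (v * (starRingEnd ℂ) v' + (starRingEnd ℂ) u' * u)‖
      ≤ r * ((‖u‖ ^2 + ‖v‖ ^2 + (‖u'‖ ^2 + ‖v'‖ ^2))/2) := by
  rw [norm_mul, Complex.norm_real, Real.norm_eq_abs, abs_of_nonneg hr]
  refine mul_le_mul_of_nonneg_left ?_ hr
  have h1 : ‖v * (starRingEnd ℂ) v' + (starRingEnd ℂ) u' * u‖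
      ≤ ‖v‖ * ‖v'‖ + ‖u'‖ * ‖u‖ := by
    refine (norm_add_le _ _).trans ?_
    simp [norm_mul, Complex.norm_conj]
  nlinarith [sq_nonneg (‖v‖ - ‖v'‖),
    sq_nonneg (‖u‖ - ‖u'‖)]

lemma main_lt (n : ℕ) (hn : 1 ≤ n) (t : ℕ → ℂ)
    (ht : ∃ i, 1 ≤ i ∧ i ≤ 2*n ∧ t i ≠ 0) :
    ‖∑ i ∈ range (n-1), (rHiggs n (2*i+2) : ℂ) *
        (t (2*i+2) * (starRingEnd ℂ) (t (2*i+4)) + (starRingEnd ℂ) (t (2*i+3)) * t (2*i+1))‖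
      < ∑ i ∈ range n, rHiggs n (2*i+1) *
          (‖t (2*i+1)‖ ^ 2 + ‖t (2*i+2)‖ ^ 2) := by
  obtain ⟨m, rfl⟩ : ∃ m, n = m + 1 := ⟨n - 1, by omega⟩
  set n := m + 1 with hn'
  set A : ℕ → ℝ := fun j => ‖t (2*j+1)‖ ^ 2 + ‖t (2*j+2)‖ ^ 2 with hA
  set e : ℕ → ℝ := fun j => rHiggs n (2*j) with he
  have hA0 : ∀ j, 0 ≤ A j := fun j => add_nonneg (sq_nonneg _) (sq_nonneg _)
  have he0 : e 0 = 0 := by simp [he, rHiggs]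
  have hen : e (m+1) = 0 := by
    have : ((2*(m+1):ℕ):ℝ) * ((2*n : ℝ) - ((2*(m+1):ℕ):ℝ)) / 2 = 0 := by
      rw [hn']; push_cast; ring
    simp only [he, rHiggs, this, Real.sqrt_zero]
  -- Step 1: triangle + AM-GM bound
  have step1 : ‖∑ i ∈ range (n-1), (rHiggs n (2*i+2) : ℂ) *
        (t (2*i+2) * (starRingEnd ℂ) (t (2*i+4)) + (starRingEnd ℂ) (t (2*i+3)) * t (2*i+1))‖
      ≤ ∑ i ∈ range m, e (i+1) * ((A i + A (i+1))/2) := by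
    have : n - 1 = m := by omega
    rw [this]
    refine (norm_sum_le _ _).trans (Finset.sum_le_sum fun i _ => ?_)
    have := term_bound (rHiggs n (2*i+2)) (rHiggs_nonneg n _)
      (t (2*i+1)) (t (2*i+2)) (t (2*i+3)) (t (2*i+4))
    have hidx : e (i+1) = rHiggs n (2*i+2) := by
      simp only [he]; congr 1
    rw [hidx, hA]
    refine this.trans_eq ?_
    simp only [show 2*(i+1)+1 = 2*i+3 by ring, show 2*(i+1)+2 = 2*i+4 by ring]
  -- Step 2: Abel identity
  have step2 : ∑ i ∈ range m, e (i+1) * ((A i + A (i+1))/2)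
      = ∑ j ∈ range (m+1), ((e (j+1) + e j)/2) * A j := by
    have h := abel_id m e A
    rw [he0, hen] at h
    have l : ∑ i ∈ range m, e (i+1) * ((A i + A (i+1))/2)
        = (∑ i ∈ range m, e (i+1) * (A i + A (i+1))) / 2 := by
      rw [Finset.sum_div]; exact Finset.sum_congr rfl fun j _ => by ring
    have r : ∑ j ∈ range (m+1), ((e (j+1) + e j)/2) * A j
        = (∑ j ∈ range (m+1), (e (j+1) + e j) * A j) / 2 := by
      rw [Finset.sum_div]; exact Finset.sum_congr rfl fun j _ => by ring
    rw [l, r, h]; ring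
  -- Step 3: strict comparison
  have step3 : ∑ j ∈ range (m+1), ((e (j+1) + e j)/2) * A j
      < ∑ j ∈ range (m+1), rHiggs n (2*j+1) * A j := by
    refine Finset.sum_lt_sum (fun j hj => ?_) ?_
    · have hjm : j + 1 ≤ n := by simp at hj; omega
      have hk := rHiggs_key n j hjm
      have : (e (j+1) + e j)/2 ≤ rHiggs n (2*j+1) := by
        simp only [he]
        have : 2*(j+1) = 2*j+2 := by ring
        rw [this]; linarith
      exact mul_le_mul_of_nonneg_right this (hA0 j)
    · obtain ⟨i, hi1, hi2, hit⟩ := ht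
      refine ⟨(i-1)/2, Finset.mem_range.mpr (by omega), ?_⟩
      have hApos : 0 < A ((i-1)/2) := by
        have habs : 0 < ‖t i‖ := norm_pos_iff.mpr hit
        have : i = 2*((i-1)/2)+1 ∨ i = 2*((i-1)/2)+2 := by omega
        rcases this with h | h
        · exact add_pos_of_pos_of_nonneg (by rw [← h]; positivity) (sq_nonneg _)
        · exact add_pos_of_nonneg_of_pos (sq_nonneg _) (by rw [← h]; positivity)
      have hjm : (i-1)/2 + 1 ≤ n := by omega
      have hk := rHiggs_key n ((i-1)/2) hjm
      have : (e ((i-1)/2+1) + e ((i-1)/2))/2 < rHiggs n (2*((i-1)/2)+1) := by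
        simp only [he]
        have h2 : 2*((i-1)/2+1) = 2*((i-1)/2)+2 := by ring
        rw [h2]; linarith
      exact mul_lt_mul_of_pos_right this hApos
  calc ‖∑ i ∈ range (n-1), (rHiggs n (2*i+2) : ℂ) *
        (t (2*i+2) * (starRingEnd ℂ) (t (2*i+4)) + (starRingEnd ℂ) (t (2*i+3)) * t (2*i+1))‖
      ≤ ∑ i ∈ range m, e (i+1) * ((A i + A (i+1))/2) := step1
    _ = ∑ j ∈ range (m+1), ((e (j+1) + e j)/2) * A j := step2
    _ < ∑ j ∈ range (m+1), rHiggs n (2*j+1) * A j := step3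

/-- The key analytic inequality for the transversality of the tautological section:
for nonzero `(t_1, …, t_{2n}) ∈ ℂ^{2n}`,
`Σ_{i=1}^n r_{2i−1}(|t_{2i−1}|² + |t_{2i}|²) > |Σ_{i=1}^{n−1} r_{2i}(t_{2i} conj(t_{2i+2}) + conj(t_{2i+1}) t_{2i−1})|`,
and hence the displayed linear equation in `a` forces `a = 0`. -/
theorem higgs_transversality_inequality (n : ℕ) (hn : 1 ≤ n) (t : ℕ → ℂ)
    (ht : ∃ i, 1 ≤ i ∧ i ≤ 2*n ∧ t i ≠ 0) :
    ‖∑ i ∈ Finset.Icc 1 (n-1), (rHiggs n (2*i) : ℂ) *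
          (t (2*i) * (starRingEnd ℂ) (t (2*i+2)) + (starRingEnd ℂ) (t (2*i+1)) * t (2*i-1))‖
      < ∑ i ∈ Finset.Icc 1 n,
          rHiggs n (2*i-1) * (‖t (2*i-1)‖ ^ 2 + ‖t (2*i)‖ ^ 2) ∧
    ∀ a : ℂ,
      (starRingEnd ℂ) a * ((∑ i ∈ Finset.Icc 1 n,
            rHiggs n (2*i-1) * (‖t (2*i-1)‖ ^ 2 + ‖t (2*i)‖ ^ 2) : ℝ) : ℂ)
        + a * (∑ i ∈ Finset.Icc 1 (n-1), (rHiggs n (2*i) : ℂ) *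
            (t (2*i) * (starRingEnd ℂ) (t (2*i+2)) + (starRingEnd ℂ) (t (2*i+1)) * t (2*i-1)))
        = 0 → a = 0 := by
  have hZ : (∑ i ∈ Finset.Icc 1 (n-1), (rHiggs n (2*i) : ℂ) *
          (t (2*i) * (starRingEnd ℂ) (t (2*i+2)) + (starRingEnd ℂ) (t (2*i+1)) * t (2*i-1)))
      = ∑ i ∈ range (n-1), (rHiggs n (2*i+2) : ℂ) *
          (t (2*i+2) * (starRingEnd ℂ) (t (2*i+4)) + (starRingEnd ℂ) (t (2*i+3)) * t (2*i+1)) := by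
    rw [← Finset.Ico_add_one_right_eq_Icc, Finset.sum_Ico_eq_sum_range]
    have hr : n - 1 + 1 - 1 = n - 1 := by omega
    rw [hr]
    refine Finset.sum_congr rfl fun i _ => ?_
    have e1 : 2*(1+i) = 2*i+2 := by omega
    rw [e1]
    have e2 : 2*i+2+2 = 2*i+4 := by omega
    have e3 : 2*i+2+1 = 2*i+3 := by omega
    have e4 : 2*i+2-1 = 2*i+1 := by omega
    rw [e2, e3, e4]
  have hS : (∑ i ∈ Finset.Icc 1 n,
          rHiggs n (2*i-1) * (‖t (2*i-1)‖ ^ 2 + ‖t (2*i)‖ ^ 2))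
      = ∑ i ∈ range n, rHiggs n (2*i+1) *
          (‖t (2*i+1)‖ ^ 2 + ‖t (2*i+2)‖ ^ 2) := by
    rw [← Finset.Ico_add_one_right_eq_Icc, Finset.sum_Ico_eq_sum_range]
    have hr : n + 1 - 1 = n := by omega
    rw [hr]
    refine Finset.sum_congr rfl fun i _ => ?_
    have e1 : 2*(1+i)-1 = 2*i+1 := by omega
    have e2 : 2*(1+i) = 2*i+2 := by omega
    rw [e1, e2]
  rw [hZ, hS]
  have hlt := main_lt n hn t ht
  refine ⟨hlt, fun a ha => ?_⟩
  set Z : ℂ := ∑ i ∈ range (n-1), (rHiggs n (2*i+2) : ℂ) *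
          (t (2*i+2) * (starRingEnd ℂ) (t (2*i+4)) + (starRingEnd ℂ) (t (2*i+3)) * t (2*i+1)) with hZd
  set S : ℝ := ∑ i ∈ range n, rHiggs n (2*i+1) *
          (‖t (2*i+1)‖ ^ 2 + ‖t (2*i+2)‖ ^ 2) with hSd
  by_contra h0
  have habs : ‖(starRingEnd ℂ) a * (S:ℂ)‖ = ‖a * Z‖ := by
    have : (starRingEnd ℂ) a * (S:ℂ) = -(a * Z) := by linear_combination ha
    rw [this, norm_neg]
  have hS0 : 0 ≤ S := le_trans (norm_nonneg Z) hlt.le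
  rw [norm_mul, norm_mul, Complex.norm_conj, Complex.norm_real, Real.norm_eq_abs, abs_of_nonneg hS0] at habs
  have ha0 : 0 < ‖a‖ := norm_pos_iff.mpr h0
  have : S = ‖Z‖ := by
    field_simp at habs
    linarith
  linarith
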